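/- Let N ≥ 2, let t_1,…,t_N ≥ 0 with Σ_k t_k = 1 and t_g < 1, and fix α ∈ [1/2, 1) and an index g. Consider maximizing F(π) = Σ_{k : π_k > 0} t_k ln π_k over the simplex {π ∈ ℝ^N : π_k ≥ 0, Σ_k π_k = 1} subject to the additional constraint π_g ≥ α. Then the vector π* defined by π*_g = max(α, t_g) and π*_l = (1 − π*_g)·t_l/(1 − t_g) for l ≠ g is a maximizer of F on this constraint set. -/

import Mathlib

open scoped BigOperators

/-- Objective `F(π) = Σ_{k : π_k > 0} t_k ln π_k`, with value `⊥` (i.e. `-∞`) if some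
component with `t_k > 0` has `π_k = 0` (convention `0 · ln 0 = 0` otherwise, noting
`Real.log 0 = 0`). -/
noncomputable def mixObj {N : ℕ} (t π : Fin N → ℝ) : EReal :=
  if ∃ k, 0 < t k ∧ π k = 0 then ⊥ else ((∑ k, t k * Real.log (π k) : ℝ) : EReal)

/-!
For `q` with `q k > 0` whenever `t k > 0`, the inequality `log x ≤ x - 1` gives
`F(π) - F(q) ≤ ∑ₖ (t k / q k) π k - 1`, so `q` maximizes `F` on any set of probability
vectors on which `∑ₖ (t k / q k) π k ≤ 1`. For `q = π*` the weights `t k / π* k` equal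
`t g / π*_g` at `g` and at most `(1 - t g) / (1 - π*_g)` elsewhere, so the sum is bounded by an
affine function of `π g`; it equals `1` when `π*_g = t g`, and when `π*_g = α > t g` it is
decreasing in `π g` and equal to `1` at `π g = α`.
-/

open Finset

theorem mul_log_sub_mul_log_le {t p q : ℝ} (ht : 0 ≤ t) (hp : 0 < t → 0 < p)
    (hq : 0 < t → 0 < q) : t * Real.log p - t * Real.log q ≤ t / q * p - t := by
  rcases ht.lt_or_eq with ht | rfl
  · have hlog : Real.log p - Real.log q ≤ p / q - 1 := by
      rw [← Real.log_div (hp ht).ne' (hq ht).ne']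
      exact Real.log_le_sub_one_of_pos (div_pos (hp ht) (hq ht))
    calc t * Real.log p - t * Real.log q = t * (Real.log p - Real.log q) := by ring
      _ ≤ t * (p / q - 1) := mul_le_mul_of_nonneg_left hlog ht.le
      _ = t / q * p - t := by ring
  · simp

theorem sum_mul_log_sub_sum_mul_log_le {ι : Type*} (s : Finset ι) {t p q : ι → ℝ}
    (ht : ∀ k ∈ s, 0 ≤ t k) (hp : ∀ k ∈ s, 0 < t k → 0 < p k)
    (hq : ∀ k ∈ s, 0 < t k → 0 < q k) :
    ∑ k ∈ s, t k * Real.log (p k) - ∑ k ∈ s, t k * Real.log (q k)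
      ≤ ∑ k ∈ s, t k / q k * p k - ∑ k ∈ s, t k := by
  simp only [← sum_sub_distrib]
  exact sum_le_sum fun k hk => mul_log_sub_mul_log_le (ht k hk) (hp k hk) (hq k hk)

theorem mixObj_le_mixObj_of_sum_div_mul_le_one {N : ℕ} {t π q : Fin N → ℝ}
    (ht0 : ∀ k, 0 ≤ t k) (ht1 : ∑ k, t k = 1) (hπ0 : ∀ k, 0 ≤ π k)
    (hq : ∀ k, 0 < t k → 0 < q k) (hsum : ∑ k, t k / q k * π k ≤ 1) :
    mixObj t π ≤ mixObj t q := by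
  have hq_ne : ¬ ∃ k, 0 < t k ∧ q k = 0 := fun ⟨k, hk, hk0⟩ => (hq k hk).ne' hk0
  unfold mixObj
  split_ifs with hπ
  · exact bot_le
  push Not at hπ
  have hπpos : ∀ k, 0 < t k → 0 < π k := fun k hk => (hπ0 k).lt_of_ne (hπ k hk).symm
  have hgibbs := sum_mul_log_sub_sum_mul_log_le univ (fun k _ => ht0 k) (fun k _ => hπpos k)
    (fun k _ => hq k)
  rw [EReal.coe_le_coe_iff]
  linarith

theorem div_max_mul_add_div_one_sub_max_mul_le_one {a τ x : ℝ} (hτ0 : 0 ≤ τ) (hτ1 : τ < 1)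
    (ha1 : a < 1) (hax : a ≤ x) (hx0 : 0 ≤ x) :
    τ / max a τ * x + (1 - τ) / (1 - max a τ) * (1 - x) ≤ 1 := by
  rcases le_or_gt a τ with h | h
  · rw [max_eq_right h, div_self (sub_pos.2 hτ1).ne', one_mul]
    nlinarith [div_self_le_one τ]
  · have ha0 : 0 < a := hτ0.trans_lt h
    have h1a : 0 < 1 - a := sub_pos.2 ha1
    rw [max_eq_left h.le, div_mul_eq_mul_div, div_mul_eq_mul_div,
      div_add_div _ _ ha0.ne' h1a.ne', div_le_one (mul_pos ha0 h1a)]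
    nlinarith [mul_nonneg (sub_nonneg.2 hax) (sub_nonneg.2 h.le)]

section ConstrainedMStep

variable {ι : Type*} [DecidableEq ι] {t : ι → ℝ} {g : ι} {α : ℝ}

noncomputable def constrainedMStep (t : ι → ℝ) (g : ι) (α : ℝ) : ι → ℝ :=
  fun l => if l = g then max α (t g) else (1 - max α (t g)) * t l / (1 - t g)

theorem constrainedMStep_self : constrainedMStep t g α g = max α (t g) := if_pos rfl

theorem constrainedMStep_of_ne {l : ι} (hl : l ≠ g) :
    constrainedMStep t g α l = (1 - max α (t g)) * t l / (1 - t g) := if_neg hl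

theorem constrainedMStep_nonneg (ht0 : ∀ k, 0 ≤ t k) (htg : t g < 1) (hα1 : α < 1) (k : ι) :
    0 ≤ constrainedMStep t g α k := by
  by_cases hk : k = g
  · rw [hk, constrainedMStep_self]
    exact (ht0 g).trans (le_max_right _ _)
  · rw [constrainedMStep_of_ne hk]
    exact div_nonneg (mul_nonneg (sub_nonneg.2 (max_lt hα1 htg).le) (ht0 k))
      (sub_nonneg.2 htg.le)

theorem constrainedMStep_pos (htg : t g < 1) (hα1 : α < 1) {k : ι} (hk : 0 < t k) :
    0 < constrainedMStep t g α k := by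
  by_cases hkg : k = g
  · rw [hkg] at hk ⊢
    rw [constrainedMStep_self]
    exact hk.trans_le (le_max_right _ _)
  · rw [constrainedMStep_of_ne hkg]
    exact div_pos (mul_pos (sub_pos.2 (max_lt hα1 htg)) hk) (sub_pos.2 htg)

theorem div_constrainedMStep_le (ht0 : ∀ k, 0 ≤ t k) (htg : t g < 1) (hα1 : α < 1) {k : ι}
    (hkg : k ≠ g) :
    t k / constrainedMStep t g α k ≤ (1 - t g) / (1 - max α (t g)) := by
  rcases (ht0 k).lt_or_eq with hk | hk
  · rw [constrainedMStep_of_ne hkg]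
    apply le_of_eq
    field_simp [(sub_pos.2 (max_lt hα1 htg)).ne', (sub_pos.2 htg).ne']
  · rw [← hk, zero_div]
    exact div_nonneg (sub_nonneg.2 htg.le) (sub_nonneg.2 (max_lt hα1 htg).le)

theorem sum_constrainedMStep [Fintype ι] (htg : t g < 1) (ht1 : ∑ k, t k = 1) :
    ∑ k, constrainedMStep t g α k = 1 := by
  have hrest : ∑ k ∈ univ.erase g, constrainedMStep t g α k
      = (1 - max α (t g)) / (1 - t g) * ∑ k ∈ univ.erase g, t k := by
    rw [mul_sum]
    refine sum_congr rfl fun k hk => ?_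
    rw [constrainedMStep_of_ne (ne_of_mem_erase hk)]
    ring
  rw [← add_sum_erase univ _ (mem_univ g), hrest, sum_erase_eq_sub (mem_univ g), ht1,
    div_mul_cancel₀ _ (sub_pos.2 htg).ne', constrainedMStep_self, add_sub_cancel]

theorem sum_div_constrainedMStep_mul_le_one [Fintype ι] (ht0 : ∀ k, 0 ≤ t k) (htg : t g < 1)
    (hα1 : α < 1) {π : ι → ℝ} (hπ0 : ∀ k, 0 ≤ π k) (hπ1 : ∑ k, π k = 1) (hπg : α ≤ π g) :
    ∑ k, t k / constrainedMStep t g α k * π k ≤ 1 := by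
  have hrest : ∑ k ∈ univ.erase g, t k / constrainedMStep t g α k * π k
      ≤ (1 - t g) / (1 - max α (t g)) * (1 - π g) := by
    calc ∑ k ∈ univ.erase g, t k / constrainedMStep t g α k * π k
        ≤ ∑ k ∈ univ.erase g, (1 - t g) / (1 - max α (t g)) * π k :=
          sum_le_sum fun k hk => mul_le_mul_of_nonneg_right
            (div_constrainedMStep_le ht0 htg hα1 (ne_of_mem_erase hk)) (hπ0 k)
      _ = (1 - t g) / (1 - max α (t g)) * (1 - π g) := by
          rw [← mul_sum, sum_erase_eq_sub (mem_univ g), hπ1]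
  calc ∑ k, t k / constrainedMStep t g α k * π k
      = t g / max α (t g) * π g
          + ∑ k ∈ univ.erase g, t k / constrainedMStep t g α k * π k := by
        rw [← add_sum_erase univ _ (mem_univ g), constrainedMStep_self]
    _ ≤ t g / max α (t g) * π g + (1 - t g) / (1 - max α (t g)) * (1 - π g) := by
        gcongr
    _ ≤ 1 := div_max_mul_add_div_one_sub_max_mul_le_one (ht0 g) htg hα1 hπg (hπ0 g)

end ConstrainedMStep

theorem stmt6_general {N : ℕ} (t : Fin N → ℝ) (ht0 : ∀ k, 0 ≤ t k)
    (ht1 : ∑ k, t k = 1) (g : Fin N) (htg : t g < 1)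
    (α : ℝ) (hα1 : α < 1) :
    let πstar : Fin N → ℝ :=
      fun l => if l = g then max α (t g) else (1 - max α (t g)) * t l / (1 - t g)
    (∀ k, 0 ≤ πstar k) ∧ (∑ k, πstar k = 1) ∧ α ≤ πstar g ∧
      ∀ π : Fin N → ℝ, (∀ k, 0 ≤ π k) → (∑ k, π k = 1) → α ≤ π g →
        mixObj t π ≤ mixObj t πstar := by
  show (∀ k, 0 ≤ constrainedMStep t g α k) ∧ _
  refine ⟨constrainedMStep_nonneg ht0 htg hα1, sum_constrainedMStep htg ht1,
    (le_max_left _ _).trans_eq constrainedMStep_self.symm, fun π hπ0 hπ1 hπg => ?_⟩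
  exact mixObj_le_mixObj_of_sum_div_mul_le_one ht0 ht1 hπ0
    (fun k => constrainedMStep_pos htg hα1)
    (sum_div_constrainedMStep_mul_le_one ht0 htg hα1 hπ0 hπ1 hπg)

/-- M-step solution for the constrained mixture probabilities: the vector with
`π*_g = max α (t_g)` and `π*_l = (1 - π*_g) t_l / (1 - t_g)` for `l ≠ g` is feasible and
maximizes `F` over the simplex intersected with `{π : π_g ≥ α}`. -/
theorem stmt6 {N : ℕ} (hN : 2 ≤ N) (t : Fin N → ℝ) (ht0 : ∀ k, 0 ≤ t k)
    (ht1 : ∑ k, t k = 1) (g : Fin N) (htg : t g < 1)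
    (α : ℝ) (hα0 : 1 / 2 ≤ α) (hα1 : α < 1) :
    let πstar : Fin N → ℝ :=
      fun l => if l = g then max α (t g) else (1 - max α (t g)) * t l / (1 - t g)
    (∀ k, 0 ≤ πstar k) ∧ (∑ k, πstar k = 1) ∧ α ≤ πstar g ∧
      ∀ π : Fin N → ℝ, (∀ k, 0 ≤ π k) → (∑ k, π k = 1) → α ≤ π g →
        mixObj t π ≤ mixObj t πstar :=
  stmt6_general t ht0 ht1 g htg α hα1
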